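/- Let f : ℂ → ℂ be differentiable on all of ℂ and satisfy the first-order ODE f′(z) + 2z·f(z) = 1 for every z ∈ ℂ. Then there exists a constant C ∈ ℂ such that for every z ∈ ℂ, f(z) = e^{-z^2} · ∑_{n=0}^{∞} z^{2n+1}/((2n+1)·n!) + C·e^{-z^2}; that is, every solution of the ODE has the form z e^{-z^2} ₁F₁(1/2;3/2;z^2) + C e^{-z^2}. In particular the unique solution with f(0) = 0 is Dawson's integral daw z = z e^{-z^2} ₁F₁(1/2;3/2;z^2). -/

import Mathlib

/-!
Multiplying by the integrating factor `e^{z²}` turns `f′ + 2z f = 1` into `(e^{z²} f)′ = e^{z²}`.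
The series `∑ z^{2n+1}/((2n+1) n!)` is the termwise primitive of `e^{z²} = ∑ z^{2n}/n!` vanishing
at `0`, so `e^{z²} f` equals that series plus the constant `f 0`. The same primitive, composed
with `t ↦ t z`, evaluates the segment integral `z ∫₀¹ e^{(tz)²} dt` by the fundamental theorem
of calculus.
-/

open Complex Nat

theorem cexp_mul_sub_eq_of_deriv_add_mul_eq {f a a' g F : ℂ → ℂ} (hf : Differentiable ℂ f)
    (ha : ∀ z, HasDerivAt a (a' z) z) (hF : ∀ z, HasDerivAt F (cexp (a z) * g z) z)
    (hode : ∀ z, deriv f z + a' z * f z = g z) (z w : ℂ) :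
    cexp (a z) * f z - F z = cexp (a w) * f w - F w := by
  have hderiv : ∀ z, HasDerivAt (fun z => cexp (a z) * f z - F z) 0 z := fun z => by
    refine (((ha z).cexp.mul (hf z).hasDerivAt).sub (hF z)).congr_deriv ?_
    rw [← hode z]
    ring
  exact is_const_of_deriv_eq_zero (fun z => (hderiv z).differentiableAt)
    (fun z => (hderiv z).deriv) z w

theorem integral_mul_comp_ofReal_mul_eq_sub {F g : ℂ → ℂ} (hF : ∀ w, HasDerivAt F (g w) w)
    (hg : Continuous g) (z : ℂ) :
    ∫ t in (0 : ℝ)..1, z * g (t * z) = F z - F 0 := by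
  have hderiv : ∀ t : ℝ, HasDerivAt (fun t : ℝ => F (t * z)) (z * g (t * z)) t := fun t =>
    (((hF _).comp (t : ℂ) (hasDerivAt_mul_const z)).comp_ofReal).congr_deriv (mul_comm _ _)
  have hcont : Continuous fun t : ℝ => z * g (t * z) := by fun_prop
  rw [intervalIntegral.integral_eq_sub_of_hasDerivAt (fun t _ => hderiv t)
    (hcont.intervalIntegrable 0 1)]
  simp

noncomputable def dawsonSeries (z : ℂ) : ℂ :=
  ∑' n : ℕ, z ^ (2 * n + 1) / ((2 * (n : ℂ) + 1) * (n ! : ℂ))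

theorem dawsonSeries_zero : dawsonSeries 0 = 0 := by
  simp [dawsonSeries]

theorem dawsonSeries_eq_mul_tsum (z : ℂ) :
    dawsonSeries z = z * ∑' n : ℕ, z ^ (2 * n) / ((2 * (n : ℂ) + 1) * (n ! : ℂ)) := by
  rw [dawsonSeries, ← tsum_mul_left]
  exact tsum_congr fun n => by ring

theorem cexp_sq_eq_tsum (z : ℂ) : cexp (z ^ 2) = ∑' n : ℕ, z ^ (2 * n) / (n ! : ℂ) := by
  rw [Complex.exp_eq_exp_ℂ, NormedSpace.exp_eq_tsum_div]
  simp_rw [pow_mul]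

theorem hasDerivAt_dawsonSeries (z : ℂ) : HasDerivAt dawsonSeries (cexp (z ^ 2)) z := by
  set R := ‖z‖ + 1
  rw [cexp_sq_eq_tsum]
  unfold dawsonSeries
  refine hasDerivAt_tsum_of_isPreconnected (g' := fun n w => w ^ (2 * n) / (n ! : ℂ))
    (Real.summable_pow_div_factorial (R ^ 2))
    Metric.isOpen_ball (convex_ball (0 : ℂ) R).isPreconnected (fun n w _ => ?_) (fun n w hw => ?_)
    (y₀ := 0) (Metric.mem_ball_self (by positivity)) ?_ ?_
  · have hn : (2 * (n : ℂ) + 1) ≠ 0 := by exact_mod_cast (2 * n).succ_ne_zero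
    refine ((hasDerivAt_pow (2 * n + 1) w).div_const ((2 * (n : ℂ) + 1) * (n ! : ℂ))).congr_deriv ?_
    push_cast
    field_simp
  · rw [norm_div, norm_pow, Complex.norm_natCast, ← pow_mul]
    gcongr
    exact (mem_ball_zero_iff.mp hw).le
  · exact summable_zero.congr fun n => by simp
  · simp [R]

theorem integral_mul_cexp_sq_eq_dawsonSeries (z : ℂ) :
    z * ∫ t in (0 : ℝ)..1, cexp ((t * z) ^ 2) = dawsonSeries z := by
  rw [← intervalIntegral.integral_const_mul,
    integral_mul_comp_ofReal_mul_eq_sub hasDerivAt_dawsonSeries (by fun_prop), dawsonSeries_zero,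
    sub_zero]

/-- Every entire solution of `f′(z) + 2z f(z) = 1` has the form
`f(z) = e^{-z²} ∑ z^{2n+1}/((2n+1) n!) + C e^{-z²} = z e^{-z²} ₁F₁(1/2;3/2;z²) + C e^{-z²}`;
in particular the unique solution with `f(0) = 0` is Dawson's integral
`daw z = e^{-z²} ∫₀^z e^{η²} dη = z e^{-z²} ₁F₁(1/2;3/2;z²)`. -/
theorem ode_solutions_dawson (f : ℂ → ℂ) (hf : Differentiable ℂ f)
    (hode : ∀ z : ℂ, deriv f z + 2 * z * f z = 1) :
    (∃ C : ℂ, ∀ z : ℂ,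
      f z = Complex.exp (-z ^ 2) *
              (∑' n : ℕ, z ^ (2 * n + 1) / ((2 * (n : ℂ) + 1) * (n.factorial : ℂ)))
            + C * Complex.exp (-z ^ 2)) ∧
    (f 0 = 0 → ∀ z : ℂ,
      f z = Complex.exp (-z ^ 2) * (z * ∫ t in (0:ℝ)..1, Complex.exp (((t : ℂ) * z) ^ 2)) ∧
      f z = z * Complex.exp (-z ^ 2) *
              ∑' n : ℕ, z ^ (2 * n) / ((2 * (n : ℂ) + 1) * (n.factorial : ℂ))) := by
  have hsol : ∀ z, f z = cexp (-z ^ 2) * dawsonSeries z + f 0 * cexp (-z ^ 2) := fun z => by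
    have hconst : cexp (z ^ 2) * f z - dawsonSeries z = f 0 := by
      have := cexp_mul_sub_eq_of_deriv_add_mul_eq hf (fun w => by simpa using hasDerivAt_pow 2 w)
        (fun w => by simpa using hasDerivAt_dawsonSeries w) hode z 0
      simpa [dawsonSeries_zero] using this
    rw [Complex.exp_neg]
    field_simp
    linear_combination hconst
  refine ⟨⟨f 0, hsol⟩, fun h0 z => ⟨?_, ?_⟩⟩
  · rw [hsol, h0, integral_mul_cexp_sq_eq_dawsonSeries]
    ring
  · rw [hsol, h0, dawsonSeries_eq_mul_tsum]
    ring
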